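/- arXiv:1305.1941 — 5 statements merged into one kernel-verified Lean document; each statement's English description precedes it below -/
import Mathlib

section
/- The Baxterized elements X_i(x) = σ_i + λx/(1-x) with λ = q - q^{-1} satisfy the Yang–Baxter equation X_i(x) X_{i+1}(xy) X_i(y) = X_{i+1}(y) X_i(xy) X_{i+1}(x) for all x, y ∈ C with x, y, xy ≠ 1. -/
/-- The Baxterized element `X i x = σ i + (q - q⁻¹) x / (1 - x)`. -/
noncomputable def bax {A : Type*} [Ring A] [Algebra ℂ A]
    (q : ℂ) (σ : ℕ → A) (i : ℕ) (x : ℂ) : A :=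
  σ i + ((q - q⁻¹) * x / (1 - x)) • (1 : A)

lemma bax_key {A : Type*} [Ring A] [Algebra ℂ A] (L a b c : ℂ) (s t : A)
    (hbr : s * t * s = t * s * t)
    (hs : s * s = L • s + 1) (ht : t * t = L • t + 1)
    (hc : a * b + b * c + L * b = a * c) :
    (s + a • 1) * (t + b • 1) * (s + c • 1)
      = (t + c • 1) * (s + b • 1) * (t + a • 1) := by
  simp only [add_mul, mul_add, smul_mul_assoc, mul_smul_comm, one_mul, mul_one, smul_smul]
  rw [hs, ht, hbr]
  match_scalars <;>
    first
      | linear_combination hc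
      | ring1
      | linear_combination -hc

/-- The Baxterized elements satisfy the Yang–Baxter equation. -/
theorem baxterized_yang_baxter
    {A : Type*} [Ring A] [Algebra ℂ A] (q : ℂ) (hq : q ≠ 0) (σ : ℕ → A)
    (hbraid : ∀ i, σ i * σ (i + 1) * σ i = σ (i + 1) * σ i * σ (i + 1))
    (hcomm : ∀ i j, i + 1 < j → σ i * σ j = σ j * σ i)
    (hquad : ∀ i, (σ i - q • (1 : A)) * (σ i + q⁻¹ • (1 : A)) = 0)
    (i : ℕ) (x y : ℂ) (hx : x ≠ 1) (hy : y ≠ 1) (hxy : x * y ≠ 1) :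
    bax q σ i x * bax q σ (i + 1) (x * y) * bax q σ i y
      = bax q σ (i + 1) y * bax q σ i (x * y) * bax q σ (i + 1) x := by
  have hsq : ∀ j, σ j * σ j = (q - q⁻¹) • σ j + 1 := by
    intro j
    have h := hquad j
    have h2 : (σ j - q • (1 : A)) * (σ j + q⁻¹ • (1 : A))
        = σ j * σ j - (q - q⁻¹) • σ j - 1 := by
      simp only [sub_mul, mul_add, smul_mul_assoc, mul_smul_comm, one_mul, mul_one, smul_smul]
      match_scalars <;> (field_simp; try ring)
    rw [h2] at h
    linear_combination (norm := module) h
  unfold bax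
  apply bax_key (q - q⁻¹)
  · exact hbraid i
  · exact hsq i
  · exact hsq (i + 1)
  · have h1 : (1 : ℂ) - x ≠ 0 := sub_ne_zero.mpr (Ne.symm hx)
    have h2 : (1 : ℂ) - y ≠ 0 := sub_ne_zero.mpr (Ne.symm hy)
    have h3 : (1 : ℂ) - x * y ≠ 0 := sub_ne_zero.mpr (Ne.symm hxy)
    generalize q - q⁻¹ = L
    field_simp
    ring
end

section
/- After normalization by f(x) = (1-x)/(q - x/q), the Baxterized elements satisfy the unitarity relation f(x) f(1/x) X_i(x) X_i(1/x) = 1 for all x with x ∉ {0, 1, q^2, q^{-2}}. -/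
/-- The normalization factor `f(x) = (1-x)/(q - x/q)`. -/
noncomputable def baxNorm (q x : ℂ) : ℂ := (1 - x) / (q - x / q)

/-- After normalization by `f(x)`, the Baxterized elements satisfy the unitarity relation
`f(x) f(1/x) X_i(x) X_i(1/x) = 1`. -/
theorem baxterized_normalized_unitarity
    {A : Type*} [Ring A] [Algebra ℂ A] (q : ℂ) (hq : q ≠ 0) (σ : ℕ → A)
    (hquad : ∀ i, (σ i - q • (1 : A)) * (σ i + q⁻¹ • (1 : A)) = 0)
    (i : ℕ) (x : ℂ) (hx0 : x ≠ 0) (hx1 : x ≠ 1)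
    (hxq : x ≠ q ^ 2) (hxq' : x ≠ q⁻¹ ^ 2) :
    (baxNorm q x * baxNorm q x⁻¹) • (bax q σ i x * bax q σ i x⁻¹) = 1 := by
  set s := σ i with hsdef
  have hx1' : (1 : ℂ) - x ≠ 0 := sub_ne_zero.mpr (Ne.symm hx1)
  have hxm1 : x - 1 ≠ 0 := sub_ne_zero.mpr hx1
  have hxi1 : x⁻¹ ≠ 1 := fun h => hx1 (by rw [← inv_inv x, h, inv_one])
  have hx1'' : (1 : ℂ) - x⁻¹ ≠ 0 := sub_ne_zero.mpr (Ne.symm hxi1)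
  have hA : q ^ 2 - x ≠ 0 := sub_ne_zero.mpr (Ne.symm hxq)
  have hB : 1 - x * q ^ 2 ≠ 0 := by
    rw [sub_ne_zero]
    intro h
    apply hxq'
    rw [inv_pow]
    field_simp
    linear_combination -h
  have hd1 : q - x / q ≠ 0 := by
    intro h
    apply hA
    have : q * q - x = 0 := by field_simp at h; linear_combination h
    rw [sq]; exact this
  have hd2 : q - x⁻¹ / q ≠ 0 := by
    intro h
    apply hB
    field_simp at h
    linear_combination -h
  have hs : s * s = (q - q⁻¹) • s + 1 := by
    have h := hquad i
    simp only [sub_mul, mul_add, smul_mul_assoc, mul_smul_comm, smul_smul, smul_sub,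
      one_mul, mul_one] at h
    rw [inv_mul_cancel₀ hq, one_smul] at h
    rw [sub_smul]
    linear_combination (norm := module) h
  set a : ℂ := (q - q⁻¹) * x / (1 - x) with ha
  set a' : ℂ := (q - q⁻¹) * x⁻¹ / (1 - x⁻¹) with ha'
  have key : bax q σ i x * bax q σ i x⁻¹
      = ((q - q⁻¹) + a' + a) • s + (1 + a * a') • 1 := by
    rw [bax, bax, ← hsdef, ← ha, ← ha']
    simp only [add_mul, mul_add, smul_mul_assoc, mul_smul_comm, smul_smul,
      one_mul, mul_one]
    rw [hs]
    module
  have hcoef : (q - q⁻¹) + a' + a = 0 := by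
    rw [ha, ha']
    field_simp
    ring
  have hcoef2 : (baxNorm q x * baxNorm q x⁻¹) * (1 + a * a') = 1 := by
    have e1 : (1 : ℂ) - x⁻¹ = (x - 1) / x := by field_simp
    have e2 : q - x⁻¹ / q = (x * q ^ 2 - 1) / (x * q) := by
      field_simp
    have ha'' : a' = (q - q⁻¹) / (x - 1) := by
      rw [ha', div_eq_div_iff hx1'' hxm1]
      field_simp
    have haa : 1 + a * a' = ((q - x / q) * (q - x⁻¹ / q)) / ((1 - x) * (1 - x⁻¹)) := by
      rw [ha, ha'', e1, e2,
        eq_div_iff (mul_ne_zero hx1' (div_ne_zero hxm1 hx0))]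
      field_simp
      ring
    rw [baxNorm, baxNorm, haa, div_mul_div_comm,
      div_mul_div_cancel₀ (mul_ne_zero hd1 hd2),
      div_self (mul_ne_zero hx1' hx1'')]
  rw [key, hcoef, zero_smul, zero_add, smul_smul, hcoef2, one_smul]
end

section
/- The Jucys–Murphy elements J_{i,j}, defined by J_{1,j} = 1 and J_{i+1,j} = σ_{j+i-1} J_{i,j} σ_{j+i-1}, are pairwise commutative: J_{i,j} J_{k,j} = J_{k,j} J_{i,j} for all i, k. -/
/-- The j-shifted Jucys–Murphy elements: `J_{1,j} = 1`, `J_{i+1,j} = σ_{j+i-1} J_{i,j} σ_{j+i-1}`. -/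
def JM {A : Type*} [Ring A] (σ : ℕ → A) : ℕ → ℕ → A
  | 0, _ => 1
  | 1, _ => 1
  | i + 2, j => σ (j + i) * JM σ (i + 1) j * σ (j + i)

/-!
The element `J_{i,j}` is a word in `σ_j, …, σ_{j+i-2}`, so by far commutativity every generator
`σ_m` with `m ≥ j + i` commutes with it. Hence `J_{k+2,j} = σ_{j+k} J_{k+1,j} σ_{j+k}` commutes
with every `J_{i,j}`, `i ≤ k`, once `J_{k+1,j}` does, and the only genuine case is that of two
consecutive elements. There one writes `J_{n+1} = τ L τ`, `J_{n+2} = s J_{n+1} s` with `L = J_n`,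
`τ = σ_{j+n-1}`, `s = σ_{j+n}`, and a braid computation reduces the claim to `[L, J_{n+1}] = 0`.
-/

section Braid

variable {M : Type*} [Monoid M] {τ s L : M}

lemma conj_mul_mul_conj_of_braid (hb : τ * s * τ = s * τ * s) (hc : Commute L s) :
    τ * L * τ * s * (τ * L * τ) = τ * s * (L * τ * L) * s * τ :=
  calc τ * L * τ * s * (τ * L * τ)
    _ = τ * L * (s * τ * s) * L * τ := by rw [← hb]; simp only [mul_assoc]
    _ = τ * (L * s) * τ * (s * L) * τ := by simp only [mul_assoc]
    _ = τ * (s * L) * τ * (L * s) * τ := by rw [hc.eq]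
    _ = τ * s * (L * τ * L) * s * τ := by simp only [mul_assoc]

lemma commute_conj_of_braid (hb : τ * s * τ = s * τ * s) (hc : Commute L s)
    (hL : Commute L (τ * L * τ)) :
    Commute (τ * L * τ) (s * (τ * L * τ) * s) := by
  set X := τ * L * τ
  have hXsX : X * s * X = τ * s * (L * τ * L) * s * τ := conj_mul_mul_conj_of_braid hb hc
  calc X * (s * X * s)
    _ = X * s * X * s := by simp only [mul_assoc]
    _ = τ * s * (L * τ * L) * (s * τ * s) := by rw [hXsX]; simp only [mul_assoc]
    _ = τ * s * (L * X) * s * τ := by rw [← hb]; simp only [X, mul_assoc]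
    _ = τ * s * (X * L) * s * τ := by rw [hL.eq]
    _ = s * τ * s * (L * τ * L) * s * τ := by rw [← hb]; simp only [X, mul_assoc]
    _ = s * (X * s * X) := by rw [hXsX]; simp only [mul_assoc]
    _ = s * X * s * X := by simp only [mul_assoc]

end Braid

section JucysMurphy

variable {A : Type*} [Ring A] {σ : ℕ → A} {j : ℕ}

lemma JM_add_two (i : ℕ) : JM σ (i + 2) j = σ (j + i) * JM σ (i + 1) j * σ (j + i) := rfl

lemma commute_generator_JM (hcomm : ∀ i j, i + 1 < j → σ i * σ j = σ j * σ i) :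
    ∀ {k m : ℕ}, j + k ≤ m → Commute (σ m) (JM σ k j)
  | 0, _, _ => Commute.one_right _
  | 1, _, _ => Commute.one_right _
  | k + 2, m, h => by
    have hσ : Commute (σ m) (σ (j + k)) := (hcomm (j + k) m (by omega)).symm
    rw [JM_add_two]
    exact (hσ.mul_right (commute_generator_JM hcomm (by omega))).mul_right hσ

lemma commute_JM_succ (hbraid : ∀ i, σ i * σ (i + 1) * σ i = σ (i + 1) * σ i * σ (i + 1))
    (hcomm : ∀ i j, i + 1 < j → σ i * σ j = σ j * σ i) :
    ∀ n, Commute (JM σ (n + 1) j) (JM σ (n + 2) j)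
  | 0 => Commute.one_left _
  | n + 1 => by
    rw [JM_add_two (n + 1), JM_add_two n]
    exact commute_conj_of_braid (hbraid (j + n))
      (commute_generator_JM hcomm (by omega)).symm (commute_JM_succ hbraid hcomm n)

lemma commute_JM_JM_of_le (hbraid : ∀ i, σ i * σ (i + 1) * σ i = σ (i + 1) * σ i * σ (i + 1))
    (hcomm : ∀ i j, i + 1 < j → σ i * σ j = σ j * σ i) :
    ∀ {i k : ℕ}, i ≤ k → Commute (JM σ i j) (JM σ k j)
  | _, 0, _ => Commute.one_right _
  | _, 1, _ => Commute.one_right _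
  | i, k + 2, hik => by
    obtain h | rfl | rfl : i ≤ k ∨ i = k + 1 ∨ i = k + 2 := by omega
    · have hσ : Commute (JM σ i j) (σ (j + k)) := (commute_generator_JM hcomm (by omega)).symm
      rw [JM_add_two]
      exact (hσ.mul_right (commute_JM_JM_of_le hbraid hcomm (by omega))).mul_right hσ
    · exact commute_JM_succ hbraid hcomm k
    · exact Commute.refl _

end JucysMurphy

theorem jucys_murphy_commute_general
    {A : Type*} [Ring A] (σ : ℕ → A)
    (hbraid : ∀ i, σ i * σ (i + 1) * σ i = σ (i + 1) * σ i * σ (i + 1))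
    (hcomm : ∀ i j, i + 1 < j → σ i * σ j = σ j * σ i)
    (j : ℕ) :
    ∀ i k, JM σ i j * JM σ k j = JM σ k j * JM σ i j := by
  intro i k
  rcases le_total i k with h | h
  · exact (commute_JM_JM_of_le hbraid hcomm h).eq
  · exact (commute_JM_JM_of_le hbraid hcomm h).symm.eq

/-- The Jucys–Murphy elements are pairwise commutative. -/
theorem jucys_murphy_commute
    {A : Type*} [Ring A] [Algebra ℂ A] (q : ℂ) (σ : ℕ → A)
    (hbraid : ∀ i, σ i * σ (i + 1) * σ i = σ (i + 1) * σ i * σ (i + 1))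
    (hcomm : ∀ i j, i + 1 < j → σ i * σ j = σ j * σ i)
    (hquad : ∀ i, (σ i - q • (1 : A)) * (σ i + q⁻¹ • (1 : A)) = 0)
    (j : ℕ) (hj : 1 ≤ j) :
    ∀ i k, JM σ i j * JM σ k j = JM σ k j * JM σ i j :=
  jucys_murphy_commute_general σ hbraid hcomm j
end

section
/- For the free boundary model (τ_1(x) = 1), the transfer matrix for the totally symmetric or antisymmetric tableau of size m at site j = 1 equals t^{m_±}_1(x) = (Q_0/[m]_±!) ∏_{k=1}^{m-1} (Q_0 + η_±^k(x)), where η_±^m(x) = Q_+ q^m (q^2 − q^{2m} x^2/b)[m] / (q^2 − q^{4m} x^2) evaluated at q → ±q^{±1}, [m] = (q^m − q^{-m})/(q − q^{-1}), and [m]_±! is the q-factorial at q → ±q. -/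
/-- The q-number `[m] = (r^m - r^{-m})/(r - r^{-1})`. -/
noncomputable def qnum (r : ℂ) (m : ℕ) : ℂ := (r ^ m - r⁻¹ ^ m) / (r - r⁻¹)

/-- The q-factorial `[m]! = [m][m-1]⋯[1]`. -/
noncomputable def qfact (r : ℂ) : ℕ → ℂ
  | 0 => 1
  | m + 1 => qfact r m * qnum r (m + 1)

/-- `η^m(x) = Q₊ r^m (r² - r^{2m} x²/b) [m] / (r² - r^{4m} x²)`. -/
noncomputable def etaTM (r Qp b : ℂ) (m : ℕ) (x : ℂ) : ℂ :=
  Qp * r ^ m * (r ^ 2 - r ^ (2 * m) * x ^ 2 / b) * qnum r m / (r ^ 2 - r ^ (4 * m) * x ^ 2)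

/-- In the free boundary model (all extended primitive transfer matrices equal `Q₀`),
the totally (anti)symmetric transfer matrix at site `j = 1` satisfying the fusion recursion
has the closed form `t^{m_±}_1(x) = (Q₀/[m]_±!) ∏_{k=1}^{m-1} (Q₀ + η_±^k(x))`.
The substitution `q → ±q^{±1}` is encoded by the parameter `r ∈ {q, -q⁻¹}`.
`t m x L` stands for the extended transfer matrix `t^{m_±}_1(x | L₁ | L₂ | …)`. -/
theorem free_boundary_transfer_matrix
    (q r Q0 Qp b : ℂ)
    (hr : r = q ∨ r = -q⁻¹)
    (hgen : ∀ m : ℕ, 1 ≤ m → qnum r m ≠ 0)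
    (t : ℕ → ℂ → List ℂ → ℂ)
    (hbase : ∀ x L, t 1 x L = Q0)
    (hrec : ∀ m x L, 2 ≤ m →
      t m x L = (qnum r m)⁻¹ *
        (t (m - 1) x [] * t 1 (x * r ^ (2 * (m - 1))) L
          + etaTM r Qp b (m - 1) x * t (m - 1) x ((x * r ^ (2 * (m - 1))) :: L))) :
    ∀ m x, 1 ≤ m →
      t m x [] = Q0 / qfact r m * ∏ k ∈ Finset.Icc 1 (m - 1), (Q0 + etaTM r Qp b k x) := by
  have hq1 : qnum r 1 = 1 := by
    have h := hgen 1 le_rfl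
    unfold qnum at h ⊢
    simp only [pow_one] at h ⊢
    have : r - r⁻¹ ≠ 0 := by
      intro h0; rw [h0] at h; simp at h
    exact div_self this
  have hfact : ∀ m : ℕ, qfact r m ≠ 0 := by
    intro m
    induction m with
    | zero => simp [qfact]
    | succ n ih => exact mul_ne_zero ih (hgen (n + 1) (Nat.le_add_left 1 n))
  have key : ∀ m : ℕ, 1 ≤ m → ∀ x L,
      t m x L = Q0 / qfact r m * ∏ k ∈ Finset.Icc 1 (m - 1), (Q0 + etaTM r Qp b k x) := by
    intro m hm
    induction m, hm using Nat.le_induction with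
    | base =>
      intro x L
      simp [hbase, qfact, hq1]
    | succ n hn ih =>
      intro x L
      rw [hrec (n + 1) x L (by omega)]
      simp only [Nat.add_sub_cancel]
      rw [hbase, ih x [], ih x _]
      have hprod : ∏ k ∈ Finset.Icc 1 n, (Q0 + etaTM r Qp b k x)
          = (∏ k ∈ Finset.Icc 1 (n - 1), (Q0 + etaTM r Qp b k x)) * (Q0 + etaTM r Qp b n x) := by
        have : n - 1 + 1 = n := by omega
        rw [← this, Finset.prod_Icc_succ_top (by omega)]
        rw [this]
      rw [hprod, qfact]
      have h1 := hgen (n + 1) (by omega)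
      have h2 := hfact n
      field_simp
  intro m x hm
  exact key m hm x []
end

section
/- The primitive transfer matrix satisfies the recurrence t^1_j(x) = t^1_{j-1}(x) + λ Q_+ ((1 − x^2/b)/(1−x)^2) τ_{j-1}(x), and hence for j ≥ 2, t^1_j(x) = t^1_1(x) + λ Q_+ ((1 − x^2/b)/(1−x)^2) Σ_{k=1}^{j-1} τ_k(x). -/
/-- The boundary element `τ_j(x) = X_{j-1}(x) ⋯ X_1(x) τ_1(x) X_1(x) ⋯ X_{j-1}(x)`. -/
noncomputable def tauLoc {A : Type*} [Ring A] [Algebra ℂ A]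
    (q : ℂ) (σ : ℕ → A) (τ₁ : ℂ → A) : ℕ → ℂ → A
  | 0, x => τ₁ x
  | 1, x => τ₁ x
  | j + 2, x => bax q σ (j + 1) x * tauLoc q σ τ₁ (j + 1) x * bax q σ (j + 1) x

private lemma scal_aux (lam Qp Qm Q0 x : ℂ) (hQm : Qm ≠ 0) (hQp : Qp ≠ 0)
    (hx1 : (1:ℂ) - x ≠ 0) (hQ : Qp - Qm = lam * Q0) :
    lam * Qp + 2 * (lam * x / (1 - x)) * Qp
        + (lam * x / (1 - x)) * (lam * x / (1 - x)) * Q0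
      = lam * Qp * (1 - x ^ 2 / (Qp / Qm)) / (1 - x) ^ 2 := by
  have h1 : (lam * x / (1 - x)) * (lam * x / (1 - x)) * Q0
      = (x / (1 - x)) * (x / (1 - x)) * (lam * (lam * Q0)) := by ring
  rw [h1, ← hQ]
  field_simp
  ring

/-- The primitive transfer matrix `t¹_j(x) = Tr_j(τ_j(x))` satisfies the recurrence
`t¹_j(x) = t¹_{j-1}(x) + λ Q₊ ((1 - x²/b)/(1-x)²) τ_{j-1}(x)`, and hence for `j ≥ 2`,
`t¹_j(x) = t¹_1(x) + λ Q₊ ((1 - x²/b)/(1-x)²) Σ_{k=1}^{j-1} τ_k(x)`. -/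
theorem primitive_transfer_matrix_recurrence
    {A : Type*} [Ring A] [Algebra ℂ A]
    (q Q0 Qp Qm b : ℂ) (hq : q ≠ 0) (hQm : Qm ≠ 0) (hQp : Qp ≠ 0)
    (hb : b = Qp / Qm)
    (hQ : Qp - Qm = (q - q⁻¹) * Q0)
    (σ σinv : ℕ → A)
    (hinv : ∀ i, σ i * σinv i = 1 ∧ σinv i * σ i = 1)
    (hquad : ∀ i, (σ i - q • (1 : A)) * (σ i + q⁻¹ • (1 : A)) = 0)
    (H : ℕ → Subalgebra ℂ A)
    (hHmono : ∀ n, H n ≤ H (n + 1))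
    (hσH : ∀ n, σ n ∈ H (n + 1))
    (Tr : ℕ → A →ₗ[ℂ] A)
    (htr0 : ∀ n, ∀ a ∈ H n, Tr (n + 1) a = Q0 • a)
    (htr1 : ∀ n (a a' : A), a ∈ H n → a' ∈ H n →
      ∀ y : A, Tr (n + 1) (a * y * a') = a * Tr (n + 1) y * a')
    (htrp : ∀ n (a a' : A), a ∈ H n → a' ∈ H n →
      Tr (n + 1) (a * σ n * a') = Qp • (a * a'))
    (htrm : ∀ n (a a' : A), a ∈ H n → a' ∈ H n →
      Tr (n + 1) (a * σinv n * a') = Qm • (a * a'))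
    (htrc : ∀ n, ∀ a ∈ H n, Tr (n + 1) (σ n * a * σinv n) = Tr n a ∧
      Tr (n + 1) (σinv n * a * σ n) = Tr n a)
    (τ₁ : ℂ → A)
    (hτmem : ∀ j x, tauLoc q σ τ₁ j x ∈ H j)
    (j : ℕ) (hj : 2 ≤ j) (x : ℂ) (hx : x ≠ 1) :
    Tr j (tauLoc q σ τ₁ j x)
        = Tr (j - 1) (tauLoc q σ τ₁ (j - 1) x)
          + ((q - q⁻¹) * Qp * (1 - x ^ 2 / b) / (1 - x) ^ 2) • tauLoc q σ τ₁ (j - 1) x ∧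
      Tr j (tauLoc q σ τ₁ j x)
        = Tr 1 (tauLoc q σ τ₁ 1 x)
          + ((q - q⁻¹) * Qp * (1 - x ^ 2 / b) / (1 - x) ^ 2) •
            ∑ k ∈ Finset.Icc 1 (j - 1), tauLoc q σ τ₁ k x := by
  set lam : ℂ := q - q⁻¹ with hlam
  set c : ℂ := lam * x / (1 - x) with hc
  set C : ℂ := lam * Qp * (1 - x ^ 2 / b) / (1 - x) ^ 2 with hC
  have hx1 : (1 : ℂ) - x ≠ 0 := sub_ne_zero.mpr (Ne.symm hx)
  -- σ² = lam • σ + 1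
  have hsq : ∀ i, σ i * σ i = lam • σ i + 1 := by
    intro i
    have h := hquad i
    have h2 : σ i * σ i + q⁻¹ • σ i - q • σ i - (q * q⁻¹) • (1 : A) = 0 := by
      rw [← h]; noncomm_ring; module
    rw [mul_inv_cancel₀ hq, one_smul] at h2
    rw [hlam, sub_smul]
    linear_combination (norm := module) h2
  -- σinv = σ - lam • 1
  have hsinv : ∀ i, σinv i = σ i - lam • (1 : A) := by
    intro i
    have h1 : σ i * (σ i - lam • (1 : A)) = 1 := by
      rw [mul_sub, hsq i, mul_smul_comm, mul_one]; abel
    calc σinv i = σinv i * (σ i * (σ i - lam • (1 : A))) := by rw [h1, mul_one]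
      _ = (σinv i * σ i) * (σ i - lam • (1 : A)) := by rw [mul_assoc]
      _ = σ i - lam • (1 : A) := by rw [(hinv i).2, one_mul]
  -- the scalar identity
  have hscal : lam * Qp + 2 * c * Qp + c * c * Q0 = C := by
    rw [hC, hc, hb]
    exact scal_aux lam Qp Qm Q0 x hQm hQp hx1 hQ
  -- key recurrence step
  have key : ∀ n : ℕ, 1 ≤ n →
      Tr (n + 1) (tauLoc q σ τ₁ (n + 1) x)
        = Tr n (tauLoc q σ τ₁ n x) + C • tauLoc q σ τ₁ n x := by
    intro n hn
    obtain ⟨m, rfl⟩ : ∃ m, n = m + 1 := ⟨n - 1, by omega⟩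
    set N := m + 1 with hN
    set τ : A := tauLoc q σ τ₁ N x with hτ
    have hmem : τ ∈ H N := hτmem N x
    have hexp : tauLoc q σ τ₁ (N + 1) x
        = σ N * τ * σ N + c • (σ N * τ) + c • (τ * σ N) + (c * c) • τ := by
      have h0 : tauLoc q σ τ₁ (N + 1) x
          = bax q σ N x * tauLoc q σ τ₁ N x * bax q σ N x := rfl
      rw [h0, bax, ← hτ, ← hc]
      noncomm_ring
      module
    have hss : σ N * τ * σ N = σ N * τ * σinv N + lam • (σ N * τ) := by
      nth_rewrite 2 [show σ N = σinv N + lam • (1:A) by rw [hsinv]; abel]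
      rw [mul_add, mul_smul_comm, mul_one]
    rw [hexp, hss]
    simp only [map_add, map_smul]
    rw [(htrc N τ hmem).1]
    have hp1 : Tr (N + 1) (σ N * τ) = Qp • τ := by
      have := htrp N 1 τ (one_mem _) hmem
      rwa [one_mul, one_mul] at this
    have hp2 : Tr (N + 1) (τ * σ N) = Qp • τ := by
      have := htrp N τ 1 hmem (one_mem _)
      rwa [mul_one, mul_one] at this
    rw [hp1, hp2, htr0 N τ hmem, ← hscal]
    module
  -- sum form by induction
  have main : ∀ m : ℕ,
      Tr (m + 2) (tauLoc q σ τ₁ (m + 2) x)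
        = Tr 1 (tauLoc q σ τ₁ 1 x) + C • ∑ k ∈ Finset.Icc 1 (m + 1), tauLoc q σ τ₁ k x := by
    intro m
    induction m with
    | zero =>
      have := key 1 le_rfl
      simpa using this
    | succ m ih =>
      have hk := key (m + 2) (by omega)
      rw [show m + 1 + 2 = m + 2 + 1 by ring, hk, ih,
        Finset.sum_Icc_succ_top (by omega : 1 ≤ m + 2)]
      rw [smul_add]
      abel
  obtain ⟨m, rfl⟩ : ∃ m, j = m + 2 := ⟨j - 2, by omega⟩
  constructor
  · have hk := key (m + 1) (by omega)
    simpa [show m + 2 - 1 = m + 1 by omega, Nat.add_assoc] using hk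
  · have := main m
    simpa [show m + 2 - 1 = m + 1 by omega] using this
end
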